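/- arXiv:1605.01928 — 2 statements merged into one kernel-verified Lean document; each statement's English description precedes it below -/
import Mathlib

section
/- For n ∈ ℕ let h_n(x) := e^{−x²}[H_{n+1}(x)² − H_n(x)H_{n+2}(x)]. Then h_n(x) > 0 for all x ∈ ℝ, and for all x ∈ ℝ one has h_n(x) ≤ (4^{n+1}/(2π))·((2n+3)/(n+1))·Γ(n/2 + 1)² if n is odd, and h_n(x) ≤ (4^{n+1}/(2π))·(n+1)·Γ((n+1)/2)² if n is even. -/
open Real

/-- The physicists' Hermite polynomials. -/
noncomputable def H : ℕ → ℝ → ℝ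
  | 0, _ => 1
  | 1, x => 2 * x
  | (n + 2), x => 2 * x * H (n + 1) x - 2 * ((n : ℝ) + 1) * H n x

/-- The function `h_n(x) = e^{-x²}[H_{n+1}(x)² - H_n(x)H_{n+2}(x)]`. -/
noncomputable def h (n : ℕ) (x : ℝ) : ℝ :=
  Real.exp (-x ^ 2) * ((H (n + 1) x) ^ 2 - H n x * H (n + 2) x)

lemma H_step (k : ℕ) (x : ℝ) : H (k+2) x = 2*x*H (k+1) x - 2*((k:ℝ)+1)*H k x := rfl

lemma H_hasDerivAt : ∀ (k : ℕ) (x : ℝ), HasDerivAt (H k) (2*x*H k x - H (k+1) x) x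
  | 0, x => by
      have h0 : (2*x*H 0 x - H 1 x) = 0 := by simp [H]
      rw [h0]
      exact hasDerivAt_const x 1
  | 1, x => by
      have h1 : (2*x*H 1 x - H 2 x) = 2 := by simp [H_step, H]
      rw [h1]
      exact ((hasDerivAt_id x).const_mul (2:ℝ)).congr_deriv (by simp)
  | (k + 2), x => by
      have ih1 := H_hasDerivAt (k+1) x
      have ih0 := H_hasDerivAt k x
      have d1 : HasDerivAt (fun y => 2*y*H (k+1) y)
          (2*H (k+1) x + 2*x*(2*x*H (k+1) x - H (k+2) x)) x := by
        simpa using ((hasDerivAt_id x).const_mul (2:ℝ)).fun_mul ih1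
      have d2 : HasDerivAt (fun y => 2*((k:ℝ)+1)*H k y)
          (2*((k:ℝ)+1)*(2*x*H k x - H (k+1) x)) x := ih0.const_mul _
      have d := d1.fun_sub d2
      have heq : (fun y => 2*y*H (k+1) y - 2*((k:ℝ)+1)*H k y) = H (k+2) := by
        funext y; rw [H_step]
      rw [heq] at d
      refine d.congr_deriv ?_
      rw [H_step (k+1), H_step k]
      push_cast
      ring

lemma exp_hasDerivAt (x : ℝ) :
    HasDerivAt (fun y : ℝ => Real.exp (-y^2)) (-(2*x) * Real.exp (-x^2)) x := by
  have hp : HasDerivAt (fun y : ℝ => -y^2) (-(2*x)) x := by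
    simpa using (hasDerivAt_pow 2 x).fun_neg
  simpa [mul_comm, Function.comp_def] using (Real.hasDerivAt_exp (-x^2)).comp x hp

/-- The Lyapunov function Θ has derivative -x e^{-x²} H_{n+1}(x)²/(n+1). -/
lemma theta_hasDerivAt (n : ℕ) (x : ℝ) :
    HasDerivAt (fun y => h n y + Real.exp (-y^2) * (H (n+1) y)^2 / (2*((n:ℝ)+1)))
      (-(x * Real.exp (-x^2) * (H (n+1) x)^2 / ((n:ℝ)+1))) x := by
  have hB := H_hasDerivAt (n+1) x
  have hA := H_hasDerivAt n x
  have hC := H_hasDerivAt (n+2) x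
  have hBsq : HasDerivAt (fun y => (H (n+1) y)^2)
      (2 * (H (n+1) x) ^ 1 * (2*x*H (n+1) x - H (n+2) x)) x := by
    simpa using hB.fun_pow 2
  have hAC : HasDerivAt (fun y => H n y * H (n+2) y)
      ((2*x*H n x - H (n+1) x) * H (n+2) x + H n x * (2*x*H (n+2) x - H (n+3) x)) x :=
    hA.mul hC
  have hpoly := hBsq.fun_sub hAC
  have hexp := exp_hasDerivAt x
  have dh : HasDerivAt (h n)
      ((-(2*x) * Real.exp (-x^2)) * ((H (n+1) x)^2 - H n x * H (n+2) x)
        + Real.exp (-x^2) * (2 * (H (n+1) x) ^ 1 * (2*x*H (n+1) x - H (n+2) x)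
            - ((2*x*H n x - H (n+1) x) * H (n+2) x + H n x * (2*x*H (n+2) x - H (n+3) x)))) x := by
    have := hexp.fun_mul hpoly
    exact this
  have dP : HasDerivAt (fun y => Real.exp (-y^2) * (H (n+1) y)^2 / (2*((n:ℝ)+1)))
      (((-(2*x) * Real.exp (-x^2)) * (H (n+1) x)^2
        + Real.exp (-x^2) * (2 * (H (n+1) x) ^ 1 * (2*x*H (n+1) x - H (n+2) x))) / (2*((n:ℝ)+1))) x :=
    (hexp.fun_mul hBsq).div_const _
  have d := dh.fun_add dP
  refine d.congr_deriv ?_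
  have e1 : H (n+2) x = 2*x*H (n+1) x - 2*((n:ℝ)+1)*H n x := H_step n x
  have e2 : H (n+3) x = 2*x*H (n+2) x - 2*((n:ℝ)+1+1)*H (n+1) x := by
    have := H_step (n+1) x; rw [this]; push_cast; ring
  have hne : ((n:ℝ)+1) ≠ 0 := by positivity
  rw [e2, e1]
  field_simp
  ring

/-- key bound -/
lemma h_key (n : ℕ) (x : ℝ) :
    h n x ≤ h n 0 + (H (n+1) 0)^2 / (2*((n:ℝ)+1)) := by
  set θ : ℝ → ℝ := fun y => h n y + Real.exp (-y^2) * (H (n+1) y)^2 / (2*((n:ℝ)+1)) with hθ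
  have hdiff : Differentiable ℝ θ := fun y => (theta_hasDerivAt n y).differentiableAt
  have hθ0 : θ x ≤ θ 0 := by
    rcases le_total 0 x with hx | hx
    · have anti : AntitoneOn θ (Set.Ici 0) := by
        apply antitoneOn_of_deriv_nonpos (convex_Ici 0) hdiff.continuous.continuousOn
          (fun y _ => (hdiff y).differentiableWithinAt)
        intro y hy
        rw [interior_Ici] at hy
        rw [(theta_hasDerivAt n y).deriv]
        have hy' : (0:ℝ) ≤ y := le_of_lt hy
        have : 0 ≤ y * Real.exp (-y^2) * (H (n+1) y)^2 / ((n:ℝ)+1) := by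
          apply div_nonneg _ (by positivity)
          exact mul_nonneg (mul_nonneg hy' (Real.exp_pos _).le) (sq_nonneg _)
        linarith
      exact anti (Set.self_mem_Ici) hx hx
    · have mono : MonotoneOn θ (Set.Iic 0) := by
        apply monotoneOn_of_deriv_nonneg (convex_Iic 0) hdiff.continuous.continuousOn
          (fun y _ => (hdiff y).differentiableWithinAt)
        intro y hy
        rw [interior_Iic] at hy
        rw [(theta_hasDerivAt n y).deriv]
        have h1 : y * Real.exp (-y^2) * (H (n+1) y)^2 ≤ 0 := by
          apply mul_nonpos_of_nonpos_of_nonneg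
          · exact mul_nonpos_of_nonpos_of_nonneg (le_of_lt hy) (Real.exp_pos _).le
          · positivity
        have h2 : (0:ℝ) < (n:ℝ)+1 := by positivity
        have := div_nonpos_of_nonpos_of_nonneg h1 h2.le
        linarith
      exact mono hx Set.self_mem_Iic hx
  have hPx : 0 ≤ Real.exp (-x^2) * (H (n+1) x)^2 / (2*((n:ℝ)+1)) := by positivity
  have : θ 0 = h n 0 + (H (n+1) 0)^2 / (2*((n:ℝ)+1)) := by
    simp [hθ]
  calc h n x ≤ θ x := by simp only [hθ]; linarith
  _ ≤ θ 0 := hθ0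
  _ = _ := this

/-- recurrence for h -/
lemma h_rec (n : ℕ) (x : ℝ) :
    h (n+1) x = 2*((n:ℝ)+1)*h n x + 2*Real.exp (-x^2)*(H (n+1) x)^2 := by
  have e1 : H (n+2) x = 2*x*H (n+1) x - 2*((n:ℝ)+1)*H n x := H_step n x
  have e2 : H (n+3) x = 2*x*H (n+2) x - 2*((n:ℝ)+1+1)*H (n+1) x := by
    have := H_step (n+1) x; rw [this]; push_cast; ring
  show Real.exp (-x^2) * ((H (n+2) x)^2 - H (n+1) x * H (n+3) x) = _
  rw [e2, e1]
  unfold h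
  rw [e1]
  ring

lemma h_lower : ∀ (n : ℕ) (x : ℝ), 2^(n+1) * (n.factorial : ℝ) * Real.exp (-x^2) ≤ h n x
  | 0, x => by
      have : h 0 x = 2 * Real.exp (-x^2) := by
        unfold h
        rw [H_step 0 x]
        simp [H]
        ring
      rw [this]
      norm_num
  | (n+1), x => by
      have ih := h_lower n x
      rw [h_rec n x]
      have hsq : 0 ≤ 2*Real.exp (-x^2)*(H (n+1) x)^2 := by positivity
      have hfac : ((n+1).factorial : ℝ) = ((n:ℝ)+1) * (n.factorial : ℝ) := by
        rw [Nat.factorial_succ]; push_cast; ring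
      have h2 : (2:ℝ)^(n+1+1) * ((n+1).factorial : ℝ) * Real.exp (-x^2)
          = 2*((n:ℝ)+1) * (2^(n+1) * (n.factorial:ℝ) * Real.exp (-x^2)) := by
        rw [hfac]; ring
      rw [h2]
      have hpos : (0:ℝ) ≤ 2*((n:ℝ)+1) := by positivity
      nlinarith [Real.exp_pos (-x^2)]

lemma h_pos (n : ℕ) (x : ℝ) : 0 < h n x := by
  have := h_lower n x
  have h1 : (0:ℝ) < 2^(n+1) * (n.factorial : ℝ) * Real.exp (-x^2) := by positivity
  linarith

lemma H_odd_zero : ∀ m : ℕ, H (2*m+1) 0 = 0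
  | 0 => by simp [H]
  | (m+1) => by
      have : 2*(m+1)+1 = (2*m+1)+2 := by ring
      rw [this, H_step]
      rw [H_odd_zero m]
      ring

lemma H_even_sq : ∀ m : ℕ, (H (2*m) 0)^2 * π = 4^(2*m) * (Real.Gamma ((m:ℝ) + 1/2))^2
  | 0 => by
      simp [H]
      norm_num [Real.Gamma_one_half_eq, Real.sq_sqrt Real.pi_nonneg]
  | (m+1) => by
      have ih := H_even_sq m
      have e : 2*(m+1) = (2*m)+2 := by ring
      rw [e, H_step]
      have hv : H (2*m+1) 0 = 0 := H_odd_zero m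
      rw [hv]
      have h0 : ((m:ℝ)+1/2) ≠ 0 := by positivity
      have hg : Real.Gamma ((m:ℝ)+1+1/2) = ((m:ℝ)+1/2) * Real.Gamma ((m:ℝ)+1/2) := by
        have := Real.Gamma_add_one h0
        rw [← this]; ring_nf
      push_cast
      rw [hg]
      linear_combination (4*(2*(m:ℝ)+1)^2) * ih

theorem h_pos_and_bounded (n : ℕ) (x : ℝ) :
    0 < h n x ∧
    (Odd n → h n x ≤ (4 ^ (n + 1) / (2 * π)) * ((2 * (n : ℝ) + 3) / ((n : ℝ) + 1)) *
        (Real.Gamma ((n : ℝ) / 2 + 1)) ^ 2) ∧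
    (Even n → h n x ≤ (4 ^ (n + 1) / (2 * π)) * ((n : ℝ) + 1) *
        (Real.Gamma (((n : ℝ) + 1) / 2)) ^ 2) := by
  have hπ : (0:ℝ) < π := Real.pi_pos
  refine ⟨h_pos n x, ?_, ?_⟩
  · rintro ⟨m, hm⟩
    subst hm
    have key := h_key (2*m+1) x
    have hA0 : H (2*m+1) 0 = 0 := H_odd_zero m
    have h0 : h (2*m+1) 0 = (H (2*m+1+1) 0)^2 := by
      unfold h
      rw [hA0]
      simp
    have hB : (H (2*m+1+1) 0)^2 * π = 4^(2*m+1+1) * (Real.Gamma (((m:ℝ)+1) + 1/2))^2 := by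
      have := H_even_sq (m+1)
      have e : 2*(m+1) = 2*m+1+1 := by omega
      rw [e] at this
      push_cast at this ⊢
      convert this using 3 <;> (push_cast; ring)
    have harg : ((2*m+1:ℕ):ℝ)/2 + 1 = ((m:ℝ)+1) + 1/2 := by push_cast; ring
    rw [harg]
    have hΓ : (Real.Gamma (((m:ℝ)+1) + 1/2))^2 = (H (2*m+1+1) 0)^2 * π / 4^(2*m+1+1) := by
      rw [eq_div_iff (by positivity : ((4:ℝ)^(2*m+1+1)) ≠ 0)]
      linarith [hB]
    rw [h0] at key
    rw [hΓ]
    have hne : (((2*m+1:ℕ)):ℝ) + 1 ≠ 0 := by positivity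
    have hB2 : 0 ≤ (H (2*m+1+1) 0)^2 := sq_nonneg _
    have hrhs : (4:ℝ) ^ (2*m+1 + 1) / (2 * π) * ((2 * ((2*m+1:ℕ):ℝ) + 3) / (((2*m+1:ℕ):ℝ) + 1)) *
        ((H (2*m+1+1) 0)^2 * π / 4^(2*m+1+1))
        = (H (2*m+1+1) 0)^2 * ((2*((2*m+1:ℕ):ℝ)+3) / (2*(((2*m+1:ℕ):ℝ)+1))) := by
      have h4 : ((4:ℝ)^(2*m+1+1)) ≠ 0 := by positivity
      field_simp
    rw [hrhs]
    have hfrac : (H (2*m+1+1) 0)^2 + (H (2*m+1+1) 0)^2/(2*(((2*m+1:ℕ):ℝ)+1))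
        = (H (2*m+1+1) 0)^2 * ((2*((2*m+1:ℕ):ℝ)+3) / (2*(((2*m+1:ℕ):ℝ)+1))) := by
      have : (((2*m+1:ℕ)):ℝ) + 1 > 0 := by positivity
      field_simp
      ring
    linarith
  · intro he
    obtain ⟨m, hm⟩ := he
    have hm2 : n = 2*m := by omega
    subst hm2
    have key := h_key (2*m) x
    have hB0 : H (2*m+1) 0 = 0 := H_odd_zero m
    have hC0 : H (2*m+2) 0 = -(2*(((2*m:ℕ)):ℝ)+2) * H (2*m) 0 := by
      rw [H_step]; ring
    have h0 : h (2*m) 0 = (2*(((2*m:ℕ)):ℝ)+2) * (H (2*m) 0)^2 := by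
      unfold h
      rw [hB0, hC0]
      simp
      ring
    have hA : (H (2*m) 0)^2 * π = 4^(2*m) * (Real.Gamma ((m:ℝ) + 1/2))^2 := H_even_sq m
    have harg : (((2*m:ℕ):ℝ)+1)/2 = (m:ℝ) + 1/2 := by push_cast; ring
    rw [harg]
    have hΓ : (Real.Gamma ((m:ℝ) + 1/2))^2 = (H (2*m) 0)^2 * π / 4^(2*m) := by
      rw [eq_div_iff (by positivity : ((4:ℝ)^(2*m)) ≠ 0)]
      linarith [hA]
    rw [hΓ]
    have hrhs : (4:ℝ) ^ (2*m + 1) / (2 * π) * (((2*m:ℕ):ℝ) + 1) *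
        ((H (2*m) 0)^2 * π / 4^(2*m))
        = (2*(((2*m:ℕ)):ℝ)+2) * (H (2*m) 0)^2 := by
      have h4 : ((4:ℝ)^(2*m)) ≠ 0 := by positivity
      have e4 : (4:ℝ)^(2*m+1) = 4 * 4^(2*m) := by ring
      rw [e4]
      field_simp
      push_cast
      ring
    rw [hrhs, ← h0]
    rw [hB0] at key
    simpa using key
end

section
/- Let V : ℝ → ℝ be measurable with ∫_ℝ e^{−x²} V(x)² dx < ∞, and let v_j := (1/(√π·2^j·j!)) ∫_ℝ e^{−x²} V(x) H_j(x) dx be its Hermite coefficients, so that V = ∑_{j=0}^∞ v_j H_j in L²(ℝ, e^{−x²}dx). Then for every n ∈ ℕ, ∑_{k=0}^{n} R[V, ψ_k] ≤ ∑_{k=0}^{n} (2^k (2k)!/k!)·C(n+1, k+1)·v_{2k} + (n+1)²/2, where C(a,b) denotes the binomial coefficient. (Combined with the min-max principle for the eigenvalues λ_k of −u'' + Vu = λu, this is Theorem 5.1 (genpot) of the paper.) -/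
open Real MeasureTheory Finset

/-- The Hermite functions, eigenfunctions of the quantum harmonic oscillator. -/
noncomputable def psi (k : ℕ) (x : ℝ) : ℝ := Real.exp (-x ^ 2 / 2) * H k x

/-- The Rayleigh quotient of the potential `W` at the test function `φ`. -/
noncomputable def rayleigh (W φ : ℝ → ℝ) : ℝ :=
  ((∫ x : ℝ, (deriv φ x) ^ 2) + ∫ x : ℝ, W x * (φ x) ^ 2) / ∫ x : ℝ, (φ x) ^ 2

/-- The Hermite (Fourier-type) coefficients of a potential `V`:
`v_j = (1/(√π·2^j·j!)) ∫ e^{-x²} V(x) H_j(x) dx`. -/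
noncomputable def hermCoeff (V : ℝ → ℝ) (j : ℕ) : ℝ :=
  (1 / (Real.sqrt π * 2 ^ j * (Nat.factorial j : ℝ))) *
    ∫ x : ℝ, Real.exp (-x ^ 2) * V x * H j x


open Filter Topology

lemma H_zero (x : ℝ) : H 0 x = 1 := rfl
lemma H_one (x : ℝ) : H 1 x = 2 * x := rfl
lemma H_add_two (n : ℕ) (x : ℝ) :
    H (n + 2) x = 2 * x * H (n + 1) x - 2 * ((n : ℝ) + 1) * H n x := rfl

/-- Three-term recurrence in "multiplication by 2x" form, valid for all `m` (nat subtraction). -/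
lemma H_rec (m : ℕ) (x : ℝ) :
    2 * x * H m x = H (m + 1) x + 2 * (m : ℝ) * H (m - 1) x := by
  cases m with
  | zero => simp [H_zero, H_one]
  | succ m =>
      have h : H (m + 1 - 1) x = H m x := by norm_num
      rw [h, show m + 1 + 1 = m + 2 from rfl, H_add_two m x]
      push_cast
      ring

lemma hasDerivAt_H (k : ℕ) (x : ℝ) :
    HasDerivAt (fun y => H k y) (2 * (k : ℝ) * H (k - 1) x) x := by
  induction k using Nat.twoStepInduction generalizing x with
  | zero =>
      simpa using (hasDerivAt_const x (1 : ℝ)).congr_of_eventuallyEq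
        (by filter_upwards with y; rfl)
  | one =>
      have : HasDerivAt (fun y : ℝ => 2 * y) 2 x := by
        simpa using (hasDerivAt_id x).const_mul (2 : ℝ)
      simpa [H_zero, H_one] using this
  | more k ih0 ih1 =>
      have h1 : HasDerivAt (fun y : ℝ => 2 * y * H (k + 1) y)
          (2 * H (k + 1) x + 2 * x * (2 * ((k : ℝ) + 1) * H k x)) x := by
        have ha : HasDerivAt (fun y : ℝ => 2 * y) 2 x := by
          simpa using (hasDerivAt_id x).const_mul (2 : ℝ)
        have hb := ih1 x
        simp only [Nat.add_sub_cancel] at hb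
        have := ha.mul hb
        refine this.congr_deriv ?_
        push_cast
        ring
      have h2 : HasDerivAt (fun y : ℝ => 2 * ((k : ℝ) + 1) * H k y)
          (2 * ((k : ℝ) + 1) * (2 * (k : ℝ) * H (k - 1) x)) x := (ih0 x).const_mul _
      have h := h1.sub h2
      have heq : (fun y : ℝ => H (k + 2) y)
          = fun y => 2 * y * H (k + 1) y - 2 * ((k : ℝ) + 1) * H k y := by
        funext y; exact H_add_two k y
      rw [heq, show k + 2 - 1 = k + 1 from rfl]
      refine h.congr_deriv ?_
      have hr := H_rec k x
      -- 2*(k+2)*H (k+1) x = 2*H(k+1) + 2x*(2(k+1)H k) - 2(k+1)(2k H(k-1))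
      have : 2 * x * H k x = H (k + 1) x + 2 * (k : ℝ) * H (k - 1) x := hr
      push_cast
      nlinarith [this]

lemma continuous_H (k : ℕ) : Continuous (H k) :=
  continuous_iff_continuousAt.2 fun x => (hasDerivAt_H k x).continuousAt

/-- Polynomial growth bound. -/
lemma H_growth (k : ℕ) : ∃ C : ℝ, 0 ≤ C ∧ ∀ x : ℝ, |H k x| ≤ C * (1 + x ^ 2) ^ k := by
  induction k using Nat.twoStepInduction with
  | zero => exact ⟨1, zero_le_one, fun x => by simp [H_zero]⟩
  | one =>
      refine ⟨2, by norm_num, fun x => ?_⟩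
      have h1 : |H 1 x| = 2 * |x| := by rw [H_one]; rw [abs_mul]; simp
      have h2 : |x| ≤ 1 + x ^ 2 := by nlinarith [sq_nonneg (|x| - 1), sq_abs x]
      calc |H 1 x| = 2 * |x| := h1
        _ ≤ 2 * (1 + x ^ 2) := by linarith
        _ = 2 * (1 + x ^ 2) ^ 1 := by ring
  | more k iha ihb =>
      obtain ⟨C0, hC0, h0⟩ := iha
      obtain ⟨C1, hC1, h1⟩ := ihb
      refine ⟨2 * C1 + 2 * ((k : ℝ) + 1) * C0, by positivity, fun x => ?_⟩
      have hx : |x| ≤ 1 + x ^ 2 := by nlinarith [sq_nonneg (|x| - 1), sq_abs x]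
      have hb : (0:ℝ) < 1 + x ^ 2 := by positivity
      have hpow0 : (1 + x ^ 2) ^ k ≤ (1 + x ^ 2) ^ (k + 2) :=
        pow_le_pow_right₀ (by nlinarith) (by omega)
      have hpow1 : (1 + x ^ 2) ^ (k + 1) ≤ (1 + x ^ 2) ^ (k + 2) :=
        pow_le_pow_right₀ (by nlinarith) (by omega)
      have e := H_add_two k x
      have hh0 := h0 x
      have hh1 := h1 x
      have habs : |H (k + 2) x| ≤ 2 * |x| * |H (k + 1) x| + 2 * ((k : ℝ) + 1) * |H k x| := by
        have b1 : |2 * x * H (k + 1) x| = 2 * |x| * |H (k + 1) x| := by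
          rw [abs_mul, abs_mul, abs_two]
        have b2 : |2 * ((k : ℝ) + 1) * H k x| = 2 * ((k : ℝ) + 1) * |H k x| := by
          rw [abs_mul, abs_of_nonneg (by positivity : (0:ℝ) ≤ 2 * ((k : ℝ) + 1))]
        rw [e]
        exact (abs_sub _ _).trans (le_of_eq (by rw [b1, b2]))
      have hterm1 : 2 * |x| * |H (k + 1) x| ≤ 2 * C1 * (1 + x ^ 2) ^ (k + 2) := by
        calc 2 * |x| * |H (k + 1) x| ≤ 2 * (1 + x ^ 2) * (C1 * (1 + x ^ 2) ^ (k + 1)) := by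
              apply mul_le_mul (by linarith) hh1 (abs_nonneg _) (by positivity)
          _ = 2 * C1 * (1 + x ^ 2) ^ (k + 2) := by ring
      have hterm0 : 2 * ((k : ℝ) + 1) * |H k x| ≤ 2 * ((k : ℝ) + 1) * C0 * (1 + x ^ 2) ^ (k + 2) := by
        have e1 : |H k x| ≤ C0 * (1 + x ^ 2) ^ (k + 2) := hh0.trans
          (mul_le_mul_of_nonneg_left hpow0 hC0)
        nlinarith [mul_le_mul_of_nonneg_left e1 (by positivity : (0:ℝ) ≤ 2 * ((k : ℝ) + 1))]
      calc |H (k + 2) x| ≤ 2 * |x| * |H (k + 1) x| + 2 * ((k : ℝ) + 1) * |H k x| := habs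
        _ ≤ 2 * C1 * (1 + x ^ 2) ^ (k + 2) + 2 * ((k : ℝ) + 1) * C0 * (1 + x ^ 2) ^ (k + 2) := by
            linarith
        _ = (2 * C1 + 2 * ((k : ℝ) + 1) * C0) * (1 + x ^ 2) ^ (k + 2) := by ring

lemma choose_key (m n t : ℕ) :
    (t+1) * ((m+1).choose (t+1)) * ((n+1).choose (t+1)) + m * ((m-1).choose t) * ((n+1).choose t)
      = (t+1) * (m.choose (t+1)) * ((n+2).choose (t+1)) + (n+1) * (m.choose t) * (n.choose t) := by
  cases m with
  | zero =>
      cases t with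
      | zero => simp [Nat.choose_one_right]
      | succ t' => simp [Nat.choose_zero_succ, Nat.choose_eq_zero_of_lt (by omega : 1 < t' + 2)]
  | succ m' =>
      simp only [Nat.add_sub_cancel]
      rcases le_or_gt t m' with ht | ht
      · have e1 : (t+1) * (m'+2).choose (t+1) = (m'+2) * (m'+1).choose t := by
          rw [mul_comm, ← Nat.add_one_mul_choose_eq]
        have e2 : (t+1) * (m'+1).choose (t+1) = (m'+1) * m'.choose t := by
          rw [mul_comm, ← Nat.add_one_mul_choose_eq]
        have e3 : (n+1) * n.choose t = (t+1) * (n+1).choose (t+1) := by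
          rw [Nat.add_one_mul_choose_eq, mul_comm]
        have e4 : (n+2).choose (t+1) = (n+1).choose t + (n+1).choose (t+1) :=
          Nat.choose_succ_succ (n+1) t
        have e5 : m'.choose t * (m'+1) = (m'+1).choose t * (m'+1-t) :=
          Nat.choose_mul_succ_eq m' t
        have hle : t ≤ m' + 1 := by omega
        zify [hle] at e1 e2 e3 e4 e5 ⊢
        linear_combination (((n+1).choose (t+1) : ℤ)) * e1 - (((n+2).choose (t+1) : ℤ)) * e2
          - (((m'+1).choose t : ℤ)) * e3 - ((m' : ℤ)+1) * (m'.choose t : ℤ) * e4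
          - (((n+1).choose (t+1) : ℤ)) * e5
      · rcases eq_or_lt_of_le (by omega : m' + 1 ≤ t) with hteq | htlt
        · subst hteq
          simp only [Nat.choose_self, Nat.choose_succ_self, Nat.choose_eq_zero_of_lt
            (by omega : m' < m' + 1), mul_one, one_mul, mul_zero, zero_mul, add_zero, zero_add,
            Nat.choose_eq_zero_of_lt (by omega : m' + 1 < m' + 2)]
          rw [Nat.add_one_mul_choose_eq, mul_comm]
        · have z1 : (m'+2).choose (t+1) = 0 := Nat.choose_eq_zero_of_lt (by omega)
          have z2 : (m'+1).choose (t+1) = 0 := Nat.choose_eq_zero_of_lt (by omega)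
          have z3 : (m'+1).choose t = 0 := Nat.choose_eq_zero_of_lt (by omega)
          have z4 : m'.choose t = 0 := Nat.choose_eq_zero_of_lt (by omega)
          simp [z1, z2, z3, z4]

lemma choose_key_real (m n t : ℕ) :
    ((m+1).choose (t+1) : ℝ) * ((n+1).choose (t+1)) * 2^(t+1) * ((t+1).factorial)
      + 2*(m:ℝ) * (((m-1).choose t : ℝ) * ((n+1).choose t) * 2^t * t.factorial)
      - 2*((n:ℝ)+1) * ((m.choose t : ℝ) * (n.choose t) * 2^t * t.factorial)
    = (m.choose (t+1) : ℝ) * ((n+2).choose (t+1)) * 2^(t+1) * ((t+1).factorial) := by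
  have h := choose_key m n t
  have hr : ((t:ℝ)+1) * ((m+1).choose (t+1)) * ((n+1).choose (t+1))
      + (m:ℝ) * (((m-1).choose t)) * ((n+1).choose t)
      = ((t:ℝ)+1) * (m.choose (t+1)) * ((n+2).choose (t+1))
        + ((n:ℝ)+1) * (m.choose t) * (n.choose t) := by exact_mod_cast h
  have hf : (((t+1).factorial : ℕ) : ℝ) = ((t:ℝ)+1) * (t.factorial) := by
    rw [Nat.factorial_succ]; push_cast; ring
  rw [hf]
  linear_combination (2:ℝ)^(t+1) * (t.factorial : ℝ) * hr

/-- Linearization of products of Hermite polynomials. -/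
lemma H_mul : ∀ (n m : ℕ) (x : ℝ), H m x * H n x
    = ∑ r ∈ Finset.range (n+1),
        ((m.choose r : ℝ) * (n.choose r) * 2^r * (r.factorial)) * H (m + n - 2*r) x := by
  intro n
  induction n using Nat.twoStepInduction with
  | zero => intro m x; simp [H_zero]
  | one =>
      intro m x
      rw [H_one, mul_comm, H_rec m x]
      rw [Finset.sum_range_succ, Finset.sum_range_one]
      simp only [Nat.choose_zero_right, Nat.choose_one_right, Nat.choose_self,
        Nat.factorial_zero, Nat.factorial_one, pow_zero, pow_one]
      rw [show m + 1 - 2 * 1 = m - 1 by omega, show m + 1 - 2 * 0 = m + 1 by omega]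
      push_cast
      ring
  | more n ih0 ih1 =>
      intro m x
      -- Step A : expand the recurrence
      have stepA : H m x * H (n + 2) x
          = H (m+1) x * H (n+1) x + 2*(m:ℝ)*(H (m-1) x * H (n+1) x)
            - 2*((n:ℝ)+1)*(H m x * H n x) := by
        rw [H_add_two n x]
        linear_combination H (n + 1) x * H_rec m x
      rw [stepA, ih1 (m+1) x, ih1 (m-1) x, ih0 m x]
      -- extend the (H m * H n) sum to range (n+2)
      have extC : ∑ r ∈ Finset.range (n+1),
            ((m.choose r : ℝ) * (n.choose r) * 2^r * (r.factorial)) * H (m + n - 2*r) x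
          = ∑ r ∈ Finset.range (n+2),
            ((m.choose r : ℝ) * (n.choose r) * 2^r * (r.factorial)) * H (m + n - 2*r) x := by
        rw [Finset.sum_range_succ _ (n+1), Nat.choose_succ_self]
        norm_num
      -- extend the first sum to range (n+3)
      have extA : ∑ r ∈ Finset.range (n+1+1),
            (((m+1).choose r : ℝ) * ((n+1).choose r) * 2^r * (r.factorial))
              * H (m+1 + (n+1) - 2*r) x
          = ∑ r ∈ Finset.range (n+3),
            (((m+1).choose r : ℝ) * ((n+1).choose r) * 2^r * (r.factorial))
              * H (m+1 + (n+1) - 2*r) x := by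
        rw [Finset.sum_range_succ _ (n+2), Nat.choose_succ_self]
        norm_num
      rw [extC, extA]
      have key : ∑ s ∈ Finset.range (n+3),
            ((m.choose s : ℝ) * ((n+2).choose s) * 2^s * (s.factorial)) * H (m + (n+2) - 2*s) x
          - ∑ s ∈ Finset.range (n+3),
            (((m+1).choose s : ℝ) * ((n+1).choose s) * 2^s * (s.factorial))
              * H (m+1 + (n+1) - 2*s) x
          = ∑ r ∈ Finset.range (n+2),
              (2*(m:ℝ) * ((((m-1)).choose r : ℝ) * ((n+1).choose r) * 2^r * (r.factorial)
                  * H (m-1 + (n+1) - 2*r) x)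
                - 2*((n:ℝ)+1) * ((m.choose r : ℝ) * (n.choose r) * 2^r * (r.factorial)
                  * H (m + n - 2*r) x)) := by
        rw [← Finset.sum_sub_distrib]
        rw [Finset.sum_range_succ' _ (n+2)]
        have h0 : ((m.choose 0 : ℝ) * ((n+2).choose 0) * 2^0 * ((0:ℕ).factorial))
              * H (m + (n+2) - 2*0) x
            - (((m+1).choose 0 : ℝ) * ((n+1).choose 0) * 2^0 * ((0:ℕ).factorial))
              * H (m+1 + (n+1) - 2*0) x = 0 := by
          rw [show m+1+(n+1) = m+(n+2) by omega]
          norm_num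
        rw [h0, add_zero]
        refine Finset.sum_congr rfl fun r hr => ?_
        have hidx1 : m + (n+2) - 2*(r+1) = m + n - 2*r := by omega
        have hidx2 : m + 1 + (n+1) - 2*(r+1) = m + n - 2*r := by omega
        rw [hidx1, hidx2]
        cases m with
        | zero =>
            have hck := choose_key_real 0 n r
            simp only [zero_add] at hck ⊢
            push_cast at hck ⊢
            linear_combination (-(H (n - 2*r) x)) * hck
        | succ m' =>
            simp only [Nat.add_sub_cancel]
            rw [show m' + (n+1) - 2*r = m' + 1 + n - 2*r by omega]
            have hck := choose_key_real (m'+1) n r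
            rw [show m'+1-1 = m' from rfl] at hck
            linear_combination (-(H (m' + 1 + n - 2*r) x)) * hck
      rw [Finset.sum_sub_distrib] at key
      rw [← Finset.mul_sum, ← Finset.mul_sum] at key
      rw [show n+1+1 = n+2 from rfl]
      linarith [key]

lemma integrable_xpow_gaussian (n : ℕ) :
    Integrable (fun x : ℝ => x ^ n * Real.exp (-x ^ 2)) := by
  have h : (-1 : ℝ) < (n : ℝ) := lt_of_lt_of_le neg_one_lt_zero (Nat.cast_nonneg n)
  simpa [Real.rpow_natCast, neg_mul, one_mul]
    using integrable_rpow_mul_exp_neg_mul_sq (b := 1) one_pos h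

lemma integrable_onepx_gaussian (d : ℕ) :
    Integrable (fun x : ℝ => (1 + x ^ 2) ^ d * Real.exp (-x ^ 2)) := by
  have heq : ∀ x : ℝ, (1 + x ^ 2) ^ d * Real.exp (-x ^ 2)
      = ∑ i ∈ Finset.range (d + 1), (d.choose i : ℝ) * (x ^ (2 * i) * Real.exp (-x ^ 2)) := by
    intro x
    rw [add_comm (1 : ℝ) (x ^ 2), add_pow, Finset.sum_mul]
    exact Finset.sum_congr rfl fun i _ => by push_cast; ring
  have hsum : Integrable (fun x : ℝ => ∑ i ∈ Finset.range (d + 1),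
      (d.choose i : ℝ) * (x ^ (2 * i) * Real.exp (-x ^ 2))) :=
    integrable_finset_sum _ fun i _ => (integrable_xpow_gaussian (2 * i)).const_mul _
  exact hsum.congr (Filter.Eventually.of_forall fun x => (heq x).symm)

/-- Master integrability lemma for continuous functions of polynomial growth
against a Gaussian. -/
lemma integrable_gaussian_poly {g : ℝ → ℝ} (hg : Continuous g) (C : ℝ) (d : ℕ)
    (hb : ∀ x, |g x| ≤ C * (1 + x ^ 2) ^ d) :
    Integrable (fun x : ℝ => Real.exp (-x ^ 2) * g x) := by
  refine Integrable.mono' (g := fun x => C * ((1 + x ^ 2) ^ d * Real.exp (-x ^ 2)))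
    (((integrable_onepx_gaussian d).const_mul C)) ?_ ?_
  · exact ((Real.continuous_exp.comp (continuous_pow 2).neg).mul hg).aestronglyMeasurable
  · filter_upwards with x
    have h1 : |Real.exp (-x ^ 2) * g x| = Real.exp (-x ^ 2) * |g x| := by
      rw [abs_mul, abs_of_pos (Real.exp_pos _)]
    rw [Real.norm_eq_abs, h1]
    calc Real.exp (-x ^ 2) * |g x| ≤ Real.exp (-x ^ 2) * (C * (1 + x ^ 2) ^ d) :=
          mul_le_mul_of_nonneg_left (hb x) (Real.exp_pos _).le
      _ = C * ((1 + x ^ 2) ^ d * Real.exp (-x ^ 2)) := by ring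

lemma tendsto_onepx_gaussian (d : ℕ) (l : Filter ℝ) (hl : Tendsto (fun x : ℝ => 1 + x ^ 2) l atTop) :
    Tendsto (fun x : ℝ => (1 + x ^ 2) ^ d * Real.exp (-x ^ 2)) l (𝓝 0) := by
  have hcomp : Tendsto (fun x : ℝ => (1 + x ^ 2) ^ d * Real.exp (-(1 + x ^ 2))) l (𝓝 0) :=
    (tendsto_pow_mul_exp_neg_atTop_nhds_zero d).comp hl
  have := hcomp.const_mul (Real.exp 1)
  rw [mul_zero] at this
  refine this.congr fun x => ?_
  have hx : Real.exp (-x ^ 2) = Real.exp 1 * Real.exp (-(1 + x ^ 2)) := by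
    rw [← Real.exp_add]; ring_nf
  rw [hx]; ring

lemma tendsto_sq_atTop : Tendsto (fun x : ℝ => 1 + x ^ 2) atTop atTop :=
  tendsto_atTop_add_const_left _ 1 (tendsto_pow_atTop two_ne_zero)

lemma tendsto_sq_atBot : Tendsto (fun x : ℝ => 1 + x ^ 2) atBot atTop := by
  have h : Tendsto (fun x : ℝ => 1 + (-x) ^ 2) atBot atTop :=
    tendsto_sq_atTop.comp tendsto_neg_atBot_atTop
  refine h.congr fun x => by ring_nf

/-- Master decay lemma. -/
lemma tendsto_gaussian_poly {g : ℝ → ℝ} (C : ℝ) (d : ℕ)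
    (hb : ∀ x, |g x| ≤ C * (1 + x ^ 2) ^ d) (l : Filter ℝ)
    (hl : Tendsto (fun x : ℝ => 1 + x ^ 2) l atTop) :
    Tendsto (fun x : ℝ => Real.exp (-x ^ 2) * g x) l (𝓝 0) := by
  have hh := (tendsto_onepx_gaussian d l hl).const_mul C
  rw [mul_zero] at hh
  refine squeeze_zero_norm (fun x => ?_) hh
  have h1 : ‖Real.exp (-x ^ 2) * g x‖ = Real.exp (-x ^ 2) * |g x| := by
    rw [Real.norm_eq_abs, abs_mul, abs_of_pos (Real.exp_pos _)]
  rw [h1]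
  calc Real.exp (-x ^ 2) * |g x| ≤ Real.exp (-x ^ 2) * (C * (1 + x ^ 2) ^ d) :=
        mul_le_mul_of_nonneg_left (hb x) (Real.exp_pos _).le
    _ = C * ((1 + x ^ 2) ^ d * Real.exp (-x ^ 2)) := by ring

/-- FTC on the real line: a globally defined antiderivative vanishing at both ends. -/
lemma integral_eq_zero_of_antideriv {F f : ℝ → ℝ} (hd : ∀ x, HasDerivAt F (f x) x)
    (hi : Integrable f) (ht : Tendsto F atTop (𝓝 0)) (hb : Tendsto F atBot (𝓝 0)) :
    ∫ x, f x = 0 := by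
  have h1 : ∫ x in Set.Iic 0, f x = F 0 - 0 :=
    integral_Iic_of_hasDerivAt_of_tendsto' (fun x _ => hd x) hi.integrableOn hb
  have h2 : ∫ x in Set.Ioi 0, f x = 0 - F 0 :=
    integral_Ioi_of_hasDerivAt_of_tendsto' (fun x _ => hd x) hi.integrableOn ht
  rw [← intervalIntegral.integral_Iic_add_Ioi (b := 0) hi.integrableOn hi.integrableOn, h1, h2]
  ring

lemma H_mul_growth (j m : ℕ) :
    ∃ C : ℝ, 0 ≤ C ∧ ∀ x : ℝ, |H j x * H m x| ≤ C * (1 + x ^ 2) ^ (j + m) := by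
  obtain ⟨C1, hC1, h1⟩ := H_growth j
  obtain ⟨C2, hC2, h2⟩ := H_growth m
  refine ⟨C1 * C2, by positivity, fun x => ?_⟩
  rw [abs_mul, pow_add]
  calc |H j x| * |H m x| ≤ (C1 * (1 + x ^ 2) ^ j) * (C2 * (1 + x ^ 2) ^ m) :=
        mul_le_mul (h1 x) (h2 x) (abs_nonneg _) (by positivity)
    _ = C1 * C2 * ((1 + x ^ 2) ^ j * (1 + x ^ 2) ^ m) := by ring

lemma integrable_gaussian_H_mul (j m : ℕ) :
    Integrable (fun x : ℝ => Real.exp (-x ^ 2) * (H j x * H m x)) := by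
  obtain ⟨C, hC, hb⟩ := H_mul_growth j m
  exact integrable_gaussian_poly ((continuous_H j).mul (continuous_H m)) C (j + m) hb

/-- The key integration-by-parts recurrence. -/
lemma key_rec (j m : ℕ) :
    ∫ x : ℝ, Real.exp (-x ^ 2) * (H (j + 1) x * H m x)
      = 2 * (m : ℝ) * ∫ x : ℝ, Real.exp (-x ^ 2) * (H j x * H (m - 1) x) := by
  set f : ℝ → ℝ := fun x => Real.exp (-x ^ 2) * (H (j + 1) x * H m x)
    - 2 * (m : ℝ) * (Real.exp (-x ^ 2) * (H j x * H (m - 1) x)) with hf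
  have hi1 := integrable_gaussian_H_mul (j + 1) m
  have hi2 := integrable_gaussian_H_mul j (m - 1)
  have hd : ∀ x : ℝ, HasDerivAt (fun y => -(Real.exp (-y ^ 2) * (H j y * H m y))) (f x) x := by
    intro x
    have hexp : HasDerivAt (fun y : ℝ => Real.exp (-y ^ 2)) (-(2 * x) * Real.exp (-x ^ 2)) x := by
      have h1 : HasDerivAt (fun y : ℝ => -y ^ 2) (-(2 * x)) x := by
        exact (hasDerivAt_pow 2 x).neg.congr_deriv (by simp)
      simpa [mul_comm] using h1.exp
    have hprod : HasDerivAt (fun y : ℝ => H j y * H m y)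
        (2 * (j : ℝ) * H (j - 1) x * H m x + H j x * (2 * (m : ℝ) * H (m - 1) x)) x :=
      (hasDerivAt_H j x).mul (hasDerivAt_H m x)
    have := (hexp.mul hprod).neg
    refine this.congr_deriv ?_
    have hr := H_rec j x
    rw [hf]
    linear_combination (Real.exp (-x ^ 2) * H m x) * hr
  have hint : Integrable f := hi1.sub (hi2.const_mul _)
  have hbd : ∀ x : ℝ, |-(H j x * H m x)| ≤ Classical.choose (H_mul_growth j m) * (1 + x ^ 2) ^ (j + m) := by
    intro x
    rw [abs_neg]
    exact (Classical.choose_spec (H_mul_growth j m)).2 x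
  have ht : Tendsto (fun x : ℝ => -(Real.exp (-x ^ 2) * (H j x * H m x))) atTop (𝓝 0) := by
    have := (tendsto_gaussian_poly _ _ ((Classical.choose_spec (H_mul_growth j m)).2) atTop tendsto_sq_atTop).neg
    rw [neg_zero] at this
    exact this
  have hb : Tendsto (fun x : ℝ => -(Real.exp (-x ^ 2) * (H j x * H m x))) atBot (𝓝 0) := by
    have := (tendsto_gaussian_poly _ _ ((Classical.choose_spec (H_mul_growth j m)).2) atBot tendsto_sq_atBot).neg
    rw [neg_zero] at this
    exact this
  have h0 : ∫ x, f x = 0 := integral_eq_zero_of_antideriv hd hint ht hb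
  rw [hf] at h0
  rw [integral_sub hi1 (hi2.const_mul _)] at h0
  rw [integral_const_mul] at h0
  linarith

lemma gaussian_H_norm (n : ℕ) :
    ∫ x : ℝ, Real.exp (-x ^ 2) * (H n x * H n x)
      = Real.sqrt π * 2 ^ n * (n.factorial : ℝ) := by
  induction n with
  | zero =>
      have : ∀ x : ℝ, Real.exp (-x ^ 2) * (H 0 x * H 0 x) = Real.exp (-1 * x ^ 2) := by
        intro x; rw [H_zero]; ring_nf
      rw [show (fun x : ℝ => Real.exp (-x ^ 2) * (H 0 x * H 0 x)) = fun x => Real.exp (-1 * x ^ 2) from funext this]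
      rw [integral_gaussian]
      simp
  | succ n ih =>
      have hk := key_rec n (n + 1)
      rw [show n + 1 - 1 = n from rfl] at hk
      rw [hk, ih, Nat.factorial_succ]
      push_cast
      ring

lemma gaussian_H_orth : ∀ (b d : ℕ),
    ∫ x : ℝ, Real.exp (-x ^ 2) * (H (b + d + 1) x * H b x) = 0 := by
  intro b
  induction b with
  | zero =>
      intro d
      have hk := key_rec d 0
      simpa using hk
  | succ b ih =>
      intro d
      have hk := key_rec (b + d + 1) (b + 1)
      rw [show b + 1 + d + 1 = b + d + 1 + 1 by omega]
      rw [show b + 1 - 1 = b from rfl] at hk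
      rw [hk, ih d, mul_zero]

lemma exp_half_sq (x : ℝ) : Real.exp (-x ^ 2 / 2) * Real.exp (-x ^ 2 / 2) = Real.exp (-x ^ 2) := by
  rw [← Real.exp_add]; ring_nf

lemma hasDerivAt_psi (k : ℕ) (x : ℝ) :
    HasDerivAt (psi k)
      (Real.exp (-x ^ 2 / 2) * (2 * (k : ℝ) * H (k - 1) x - x * H k x)) x := by
  have hexp : HasDerivAt (fun y : ℝ => Real.exp (-y ^ 2 / 2)) (-x * Real.exp (-x ^ 2 / 2)) x := by
    have h1 : HasDerivAt (fun y : ℝ => -y ^ 2 / 2) (-x) x := by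
      have h0 := ((hasDerivAt_pow 2 x).neg).div_const 2
      refine h0.congr_deriv ?_
      simp
      ring
    simpa [mul_comm] using h1.exp
  have := hexp.mul (hasDerivAt_H k x)
  have heq : psi k = fun y => Real.exp (-y ^ 2 / 2) * H k y := rfl
  rw [heq]
  refine this.congr_deriv ?_
  ring

lemma deriv_psi (k : ℕ) (x : ℝ) :
    deriv (psi k) x = Real.exp (-x ^ 2 / 2) * (2 * (k : ℝ) * H (k - 1) x - x * H k x) :=
  (hasDerivAt_psi k x).deriv

lemma psi_norm (k : ℕ) :
    ∫ x : ℝ, (psi k x) ^ 2 = Real.sqrt π * 2 ^ k * (k.factorial : ℝ) := by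
  rw [← gaussian_H_norm k]
  congr 1
  funext x
  rw [show psi k x = Real.exp (-x ^ 2 / 2) * H k x from rfl]
  have := exp_half_sq x
  nlinarith [this]

lemma orth_special (k : ℕ) :
    ∫ x : ℝ, Real.exp (-x ^ 2) * (H (k + 1) x * H (k - 1) x) = 0 := by
  cases k with
  | zero => simpa using gaussian_H_orth 0 0
  | succ k' => simpa using gaussian_H_orth k' 1

lemma psi_kinetic (k : ℕ) :
    ∫ x : ℝ, (deriv (psi k) x) ^ 2
      = ((k : ℝ) + 1 / 2) * (Real.sqrt π * 2 ^ k * (k.factorial : ℝ)) := by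
  have hpt : ∀ x : ℝ, (deriv (psi k) x) ^ 2
      = (k : ℝ) ^ 2 * (Real.exp (-x ^ 2) * (H (k - 1) x * H (k - 1) x))
        - (k : ℝ) * (Real.exp (-x ^ 2) * (H (k + 1) x * H (k - 1) x))
        + (1 / 4) * (Real.exp (-x ^ 2) * (H (k + 1) x * H (k + 1) x)) := by
    intro x
    rw [deriv_psi]
    have heq := exp_half_sq x
    have hr := H_rec k x
    linear_combination (2 * (k : ℝ) * H (k - 1) x - x * H k x) ^ 2 * heq
      + (-(Real.exp (-x ^ 2)) * (3 * (k : ℝ) * H (k - 1) x - x * H k x - H (k + 1) x / 2) / 2) * hr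
  rw [show (fun x : ℝ => (deriv (psi k) x) ^ 2) = fun x =>
      (k : ℝ) ^ 2 * (Real.exp (-x ^ 2) * (H (k - 1) x * H (k - 1) x))
        - (k : ℝ) * (Real.exp (-x ^ 2) * (H (k + 1) x * H (k - 1) x))
        + (1 / 4) * (Real.exp (-x ^ 2) * (H (k + 1) x * H (k + 1) x)) from funext hpt]
  rw [integral_add, integral_sub]
  · rw [integral_const_mul, integral_const_mul, integral_const_mul]
    rw [gaussian_H_norm, gaussian_H_norm, orth_special]
    cases k with
    | zero =>
        norm_num
        try ring
    | succ k' =>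
        rw [show k' + 1 - 1 = k' from rfl]
        rw [Nat.factorial_succ, Nat.factorial_succ]
        push_cast
        ring
  · exact (integrable_gaussian_H_mul _ _).const_mul _
  · exact (integrable_gaussian_H_mul _ _).const_mul _
  · exact ((integrable_gaussian_H_mul _ _).const_mul _).sub
      ((integrable_gaussian_H_mul _ _).const_mul _)
  · exact (integrable_gaussian_H_mul _ _).const_mul _

section V
variable (V : ℝ → ℝ) (hmeas : Measurable V)
  (hint : Integrable (fun x : ℝ => Real.exp (-x ^ 2) * (V x) ^ 2))

include hmeas hint in
lemma integrable_eVH (j : ℕ) :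
    Integrable (fun x : ℝ => Real.exp (-x ^ 2) * V x * H j x) := by
  have hVm : AEStronglyMeasurable (fun x : ℝ => Real.exp (-x ^ 2 / 2) * V x) volume :=
    ((Real.measurable_exp.comp ((measurable_id.pow_const 2).neg.div_const 2)).mul
      hmeas).aestronglyMeasurable
  have hV2 : MemLp (fun x : ℝ => Real.exp (-x ^ 2 / 2) * V x) 2 volume := by
    rw [memLp_two_iff_integrable_sq hVm]
    refine hint.congr (Filter.Eventually.of_forall fun x => ?_)
    have h := exp_half_sq x
    linear_combination (-(V x * V x)) * h
  have hHm : AEStronglyMeasurable (fun x : ℝ => Real.exp (-x ^ 2 / 2) * H j x) volume :=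
    ((Real.continuous_exp.comp ((continuous_pow 2).neg.div_const 2)).mul
      (continuous_H j)).aestronglyMeasurable
  have hH2 : MemLp (fun x : ℝ => Real.exp (-x ^ 2 / 2) * H j x) 2 volume := by
    rw [memLp_two_iff_integrable_sq hHm]
    refine (integrable_gaussian_H_mul j j).congr (Filter.Eventually.of_forall fun x => ?_)
    have h := exp_half_sq x
    linear_combination (-(H j x * H j x)) * h
  have hpqr : (1 : ENNReal) / 1 = 1 / 2 + 1 / 2 := by
    rw [ENNReal.div_add_div_same, one_div_one, one_add_one_eq_two]
    exact (ENNReal.div_self (two_ne_zero) (ENNReal.ofNat_ne_top)).symm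
  have hprod := hH2.smul (r := 1) hV2
  rw [memLp_one_iff_integrable] at hprod
  refine hprod.congr (Filter.Eventually.of_forall fun x => ?_)
  simp only [Pi.smul_apply', Pi.smul_apply, smul_eq_mul]
  have h := exp_half_sq x
  linear_combination (V x * H j x) * h

include hmeas hint in
lemma Vterm (k : ℕ) : ∫ x : ℝ, V x * (psi k x) ^ 2
    = ∑ r ∈ Finset.range (k+1), ((k.choose r : ℝ) * (k.choose r) * 2^r * (r.factorial))
        * ∫ x : ℝ, Real.exp (-x ^ 2) * V x * H (k + k - 2*r) x := by
  have hpt : ∀ x : ℝ, V x * (psi k x) ^ 2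
      = ∑ r ∈ Finset.range (k+1), ((k.choose r : ℝ) * (k.choose r) * 2^r * (r.factorial))
          * (Real.exp (-x ^ 2) * V x * H (k + k - 2*r) x) := by
    intro x
    have h1 : V x * (psi k x) ^ 2 = Real.exp (-x ^ 2) * V x * (H k x * H k x) := by
      rw [show psi k x = Real.exp (-x ^ 2 / 2) * H k x from rfl]
      have h := exp_half_sq x
      linear_combination (V x * H k x * H k x) * h
    rw [h1, H_mul k k x, Finset.mul_sum]
    exact Finset.sum_congr rfl fun r _ => by ring
  rw [show (fun x : ℝ => V x * (psi k x) ^ 2) = fun x =>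
      ∑ r ∈ Finset.range (k+1), ((k.choose r : ℝ) * (k.choose r) * 2^r * (r.factorial))
          * (Real.exp (-x ^ 2) * V x * H (k + k - 2*r) x) from funext hpt]
  rw [integral_finset_sum _ fun r _ => (integrable_eVH V hmeas hint _).const_mul _]
  exact Finset.sum_congr rfl fun r _ => by rw [integral_const_mul]

lemma intCoeff (j : ℕ) : ∫ x : ℝ, Real.exp (-x ^ 2) * V x * H j x
    = Real.sqrt π * 2 ^ j * (j.factorial : ℝ) * hermCoeff V j := by
  rw [hermCoeff]
  have h1 : (0:ℝ) < Real.sqrt π := Real.sqrt_pos.2 Real.pi_pos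
  have h2 : (0:ℝ) < (j.factorial : ℝ) := by exact_mod_cast j.factorial_pos
  field_simp

include hmeas hint in
lemma rayleigh_psi (k : ℕ) : rayleigh V (psi k)
    = ((k : ℝ) + 1/2) + ∑ m ∈ Finset.range (k+1),
        ((k.choose m : ℝ) * 2^m * ((2*m).factorial) / (m.factorial)) * hermCoeff V (2*m) := by
  have h1 : (0:ℝ) < Real.sqrt π := Real.sqrt_pos.2 Real.pi_pos
  have h2 : (0:ℝ) < (k.factorial : ℝ) := by exact_mod_cast k.factorial_pos
  have hN : (0:ℝ) < Real.sqrt π * 2 ^ k * (k.factorial : ℝ) := by positivity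
  rw [rayleigh, psi_kinetic, psi_norm, Vterm V hmeas hint k, add_div,
    mul_div_assoc, div_self hN.ne', mul_one, Finset.sum_div]
  congr 1
  rw [← Finset.sum_range_reflect]
  refine Finset.sum_congr rfl fun m hm => ?_
  have hmk : m ≤ k := by
    simp only [Finset.mem_range] at hm; omega
  rw [show k + 1 - 1 - m = k - m by omega]
  rw [intCoeff]
  rw [show k + k - 2 * (k - m) = 2 * m by omega]
  rw [Nat.choose_symm hmk]
  have hck : ((k.choose m : ℝ)) * (m.factorial : ℝ) * ((k - m).factorial : ℝ)
      = (k.factorial : ℝ) := by exact_mod_cast Nat.choose_mul_factorial_mul_factorial hmk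
  have hpow : (2:ℝ) ^ (k - m) * 2 ^ (2 * m) = 2 ^ (k + m) := by
    rw [← pow_add]
    congr 1
    omega
  have hm2 : (0:ℝ) < (m.factorial : ℝ) := by exact_mod_cast m.factorial_pos
  have hkm2 : (0:ℝ) < ((k - m).factorial : ℝ) := by exact_mod_cast (k - m).factorial_pos
  rw [div_eq_iff hN.ne']
  rw [pow_sub₀ (2:ℝ) (by norm_num) hmk]
  rw [← hck]
  field_simp
  ring
end V

lemma sum_half (n : ℕ) : ∑ k ∈ Finset.range (n + 1), ((k : ℝ) + 1/2) = ((n : ℝ) + 1) ^ 2 / 2 := by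
  induction n with
  | zero => norm_num
  | succ n ih => rw [Finset.sum_range_succ, ih]; push_cast; ring

lemma sum_choose_cast (n m : ℕ) :
    ∑ k ∈ Finset.range (n + 1), (k.choose m : ℝ) = ((n+1).choose (m+1) : ℝ) := by
  have hnat : ∑ k ∈ Finset.range (n + 1), k.choose m = (n+1).choose (m+1) := by
    rw [← Nat.sum_Icc_choose n m]
    refine (Finset.sum_subset ?_ ?_).symm
    · intro k hk
      simp only [Finset.mem_Icc] at hk
      simp only [Finset.mem_range]
      omega
    · intro k hk hnk
      simp only [Finset.mem_range] at hk
      simp only [Finset.mem_Icc, not_and, not_le] at hnk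
      have : k < m := by omega
      exact Nat.choose_eq_zero_of_lt this
  exact_mod_cast congrArg (Nat.cast : ℕ → ℝ) hnat

theorem sum_rayleigh_le_of_hermite_expansion
    (V : ℝ → ℝ) (hmeas : Measurable V)
    (hint : Integrable (fun x : ℝ => Real.exp (-x ^ 2) * (V x) ^ 2)) (n : ℕ) :
    ∑ k ∈ Finset.range (n + 1), rayleigh V (psi k)
      ≤ (∑ k ∈ Finset.range (n + 1),
          (2 ^ k * (Nat.factorial (2 * k) : ℝ) / (Nat.factorial k : ℝ)) *
            (Nat.choose (n + 1) (k + 1) : ℝ) * hermCoeff V (2 * k))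
        + ((n : ℝ) + 1) ^ 2 / 2 := by
  refine le_of_eq ?_
  have hray : ∀ k ∈ Finset.range (n + 1), rayleigh V (psi k)
      = ((k : ℝ) + 1/2) + ∑ m ∈ Finset.range (k+1),
          ((k.choose m : ℝ) * 2^m * ((2*m).factorial) / (m.factorial)) * hermCoeff V (2*m) :=
    fun k _ => rayleigh_psi V hmeas hint k
  rw [Finset.sum_congr rfl hray, Finset.sum_add_distrib, sum_half, add_comm]
  congr 1
  -- extend inner sums to range (n+1)
  have hext : ∀ k ∈ Finset.range (n + 1),
      ∑ m ∈ Finset.range (k+1),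
          ((k.choose m : ℝ) * 2^m * ((2*m).factorial) / (m.factorial)) * hermCoeff V (2*m)
      = ∑ m ∈ Finset.range (n+1),
          ((k.choose m : ℝ) * 2^m * ((2*m).factorial) / (m.factorial)) * hermCoeff V (2*m) := by
    intro k hk
    simp only [Finset.mem_range] at hk
    refine Finset.sum_subset ?_ ?_
    · intro m hm
      simp only [Finset.mem_range] at hm ⊢
      omega
    · intro m hm hnm
      simp only [Finset.mem_range] at hm hnm
      rw [Nat.choose_eq_zero_of_lt (by omega : k < m)]
      simp
  rw [Finset.sum_congr rfl hext, Finset.sum_comm]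
  refine Finset.sum_congr rfl fun m hm => ?_
  have hfac : ∀ k : ℕ, ((k.choose m : ℝ) * 2^m * ((2*m).factorial) / (m.factorial)) * hermCoeff V (2*m)
      = (k.choose m : ℝ) * ((2^m * ((2*m).factorial) / (m.factorial)) * hermCoeff V (2*m)) := by
    intro k; ring
  rw [Finset.sum_congr rfl fun k _ => hfac k, ← Finset.sum_mul, sum_choose_cast]
  ring
end
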